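/- Define ρ : ℂ² → ℝ near (1,1) by ρ(z₁,z₂) = log|z₁| + log|z₂| + (log|z₁| − log|z₂|)⁴. Then along the complex line φ(ζ) = (1 + aζ, 1 + bζ) through (1,1) with (a,b) ≠ (0,0), the order of vanishing of ρ ∘ φ at ζ = 0 is at most 2; while along the analytic disc ψ(ζ) = (e^{ζ}, e^{−ζ}) one has ρ ∘ ψ(ζ) = 16·(Re ζ)⁴, whose order of vanishing at 0 is 4. -/

import Mathlib

/-- The defining function `ρ(z₁,z₂) = log|z₁| + log|z₂| + (log|z₁| − log|z₂|)⁴`. -/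
noncomputable def rho11 (z₁ z₂ : ℂ) : ℝ :=
  Real.log (‖z₁‖) + Real.log (‖z₂‖) +
    (Real.log (‖z₁‖) - Real.log (‖z₂‖)) ^ 4

/-!
Along the line, `log |1 + cζ| = Re (cζ - c²ζ²/2) + O(ζ³)` and the quartic term is `O(ζ⁴)`, so
`ρ(1 + aζ, 1 + bζ) = Re ((a + b)ζ) - ½ Re ((a² + b²)ζ²) + O(ζ³)`. A real part `Re (c ζⁿ)` can only
be `O(ζⁿ⁺¹)` if `c = 0`: on the real ray `ζ = t w` with `wⁿ = c̄` it equals `|c|² tⁿ`. Hence an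
`O(ζ³)` bound forces `a + b = 0 = a² + b²`, i.e. `a = b = 0`.
-/

open Filter Topology Asymptotics

section PowerVanishing

variable {𝕜 : Type*} [NontriviallyNormedField 𝕜]

theorem eq_zero_of_const_mul_pow_isBigO_pow_succ {c : 𝕜} {n : ℕ}
    (h : (fun x : 𝕜 => c * x ^ n) =O[𝓝 0] fun x => x ^ (n + 1)) : c = 0 := by
  by_contra hc
  have hpow_ne : ∃ᶠ x : 𝕜 in 𝓝 0, x ^ n ≠ 0 :=
    ((eventually_mem_nhdsWithin (a := (0 : 𝕜)) (s := {0}ᶜ)).mono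
      fun _ hx => pow_ne_zero n hx).frequently.filter_mono nhdsWithin_le_nhds
  exact isLittleO_irrefl hpow_ne <|
    (isLittleO_const_mul_left_iff hc).mp (h.trans_isLittleO (isLittleO_pow_pow n.lt_succ_self))

theorem Asymptotics.IsBigO.comp_const_mul_pow {E : Type*} [Norm E] {f : 𝕜 → E} {n : ℕ}
    (h : f =O[𝓝 0] fun z => z ^ n) (c : 𝕜) :
    (fun z => f (c * z)) =O[𝓝 0] fun z => z ^ n := by
  have hc : Tendsto (fun z : 𝕜 => c * z) (𝓝 0) (𝓝 0) :=
    (continuous_const_mul c).tendsto' _ _ (mul_zero c)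
  refine (h.comp_tendsto hc).trans ?_
  simp_rw [Function.comp_def, mul_pow]
  exact (isBigO_refl _ _).const_mul_left _

end PowerVanishing

theorem Complex.eq_zero_of_re_mul_pow_isBigO_pow_succ {c : ℂ} {n : ℕ} (hn : n ≠ 0)
    (h : (fun ζ : ℂ => (c * ζ ^ n).re) =O[𝓝 0] fun ζ => ζ ^ (n + 1)) : c = 0 := by
  obtain ⟨w, hw⟩ := IsAlgClosed.exists_pow_nat_eq (starRingEnd ℂ c) (Nat.pos_of_ne_zero hn)
  have hray : Tendsto (fun t : ℝ => (t : ℂ) * w) (𝓝 0) (𝓝 0) :=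
    Continuous.tendsto' (by fun_prop) _ _ (by simp)
  have hline : (fun t : ℝ => Complex.normSq c * t ^ n) =O[𝓝 0] fun t => t ^ (n + 1) := by
    refine ((h.comp_tendsto hray).trans ?_).congr_left fun t => ?_
    · refine isBigO_of_le' (c := ‖w‖ ^ (n + 1)) _ fun t => ?_
      simp [mul_pow, mul_comm]
    · rw [Function.comp_apply, mul_pow, hw, mul_left_comm, Complex.mul_conj, ← Complex.ofReal_pow,
        ← Complex.ofReal_mul, Complex.ofReal_re, mul_comm]
  exact Complex.normSq_eq_zero.mp (eq_zero_of_const_mul_pow_isBigO_pow_succ hline)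

theorem Complex.eq_zero_of_re_linear_add_quadratic_isBigO {α β : ℂ}
    (h : (fun ζ : ℂ => (α * ζ).re + (β * ζ ^ 2).re) =O[𝓝 0] fun ζ => ζ ^ 3) :
    α = 0 ∧ β = 0 := by
  have hquad : (fun ζ : ℂ => (β * ζ ^ 2).re) =O[𝓝 0] fun ζ => ζ ^ 2 :=
    isBigO_of_le' (c := ‖β‖) _ fun ζ => (Complex.abs_re_le_norm _).trans (norm_mul_le _ _)
  have hα : α = 0 := by
    refine Complex.eq_zero_of_re_mul_pow_isBigO_pow_succ one_ne_zero ?_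
    refine ((h.trans (isLittleO_pow_pow (by norm_num)).isBigO).sub hquad).congr_left fun ζ => ?_
    rw [add_sub_cancel_right, pow_one]
  subst hα
  refine ⟨rfl, Complex.eq_zero_of_re_mul_pow_isBigO_pow_succ two_ne_zero ?_⟩
  simpa using h

theorem Complex.log_norm_one_add_isBigO :
    (fun z : ℂ => Real.log ‖1 + z‖) =O[𝓝 0] fun z => z ^ 1 := by
  refine (isBigO_of_le' (c := 1) _ fun z => ?_).trans (Complex.log_sub_logTaylor_isBigO 0)
  simp [Complex.logTaylor, ← Complex.log_re, Complex.abs_re_le_norm]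

theorem Complex.log_norm_one_add_sub_re_isBigO :
    (fun z : ℂ => Real.log ‖1 + z‖ - (z - z ^ 2 / 2).re) =O[𝓝 0] fun z => z ^ 3 := by
  refine (isBigO_of_le' (c := 1) _ fun z => ?_).trans (Complex.log_sub_logTaylor_isBigO 2)
  have hTaylor : Complex.logTaylor 3 z = z - z ^ 2 / 2 := by
    simp [Complex.logTaylor, Finset.sum_range_succ]; ring
  rw [hTaylor, one_mul, Real.norm_eq_abs, ← Complex.log_re, ← Complex.sub_re]
  exact Complex.abs_re_le_norm _

theorem rho11_one_add_mul_sub_isBigO (a b : ℂ) :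
    (fun ζ : ℂ => rho11 (1 + a * ζ) (1 + b * ζ) -
      (((a + b) * ζ).re + (-(a ^ 2 + b ^ 2) / 2 * ζ ^ 2).re)) =O[𝓝 0] fun ζ => ζ ^ 3 := by
  have hdiff : (fun ζ : ℂ => Real.log ‖1 + a * ζ‖ - Real.log ‖1 + b * ζ‖) =O[𝓝 0]
      fun ζ => ζ ^ 1 :=
    (Complex.log_norm_one_add_isBigO.comp_const_mul_pow a).sub
      (Complex.log_norm_one_add_isBigO.comp_const_mul_pow b)
  have hquartic : (fun ζ : ℂ => (Real.log ‖1 + a * ζ‖ - Real.log ‖1 + b * ζ‖) ^ 4) =O[𝓝 0]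
      fun ζ => ζ ^ 3 := by
    refine (hdiff.pow 4).trans ?_
    simp_rw [← pow_mul]
    exact (isLittleO_pow_pow (by norm_num)).isBigO
  refine (((Complex.log_norm_one_add_sub_re_isBigO.comp_const_mul_pow a).add
    (Complex.log_norm_one_add_sub_re_isBigO.comp_const_mul_pow b)).add hquartic).congr_left
    fun ζ => ?_
  have hre : ((a + b) * ζ).re + (-(a ^ 2 + b ^ 2) / 2 * ζ ^ 2).re =
      (a * ζ - (a * ζ) ^ 2 / 2).re + (b * ζ - (b * ζ) ^ 2 / 2).re := by
    rw [← Complex.add_re, ← Complex.add_re]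
    ring_nf
  simp only [rho11, hre]
  ring

theorem stmt_11 :
    (∀ ζ : ℂ, rho11 (Complex.exp ζ) (Complex.exp (-ζ)) = 16 * ζ.re ^ 4) ∧
    (∀ a b : ℂ, (a, b) ≠ (0, 0) →
      ¬ ∃ C : ℝ, ∀ᶠ ζ in nhds (0 : ℂ),
        |rho11 (1 + a * ζ) (1 + b * ζ)| ≤ C * ‖ζ‖ ^ 3) := by
  refine ⟨fun ζ => ?_, fun a b hab ⟨C, hC⟩ => hab ?_⟩
  · simp only [rho11, Complex.norm_exp, Real.log_exp, Complex.neg_re]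
    ring
  have hρ : (fun ζ : ℂ => rho11 (1 + a * ζ) (1 + b * ζ)) =O[𝓝 0] fun ζ => ζ ^ 3 :=
    IsBigO.of_bound C (by simpa only [Real.norm_eq_abs, norm_pow] using hC)
  obtain ⟨hsum, hsq⟩ := Complex.eq_zero_of_re_linear_add_quadratic_isBigO <|
    (hρ.sub (rho11_one_add_mul_sub_isBigO a b)).congr_left fun ζ => sub_sub_cancel _ _
  have hb : b = -a := eq_neg_of_add_eq_zero_right hsum
  have ha : a = 0 := by
    subst hb
    simpa using hsq
  simp [ha, hb]
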